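/- Let D_min = {x ∈ V : (x,α) ≥ −1 for all α ∈ Π and (x,θ) ≤ 2}. Then: (1) an element w = v·t_r ∈ Ŵ is minimal if and only if w is dominant and v(r) ∈ D_min ∩ Q∨; (2) the map Ŵ_min → D_min ∩ Q∨ sending w = v·t_r to v(r) is a bijection. -/

import Mathlib

/-!
Since `w⁻¹(αᵢ) = (v r, αᵢ)δ + …` and `w⁻¹(α₀) = (1 - (v r, θ))δ + …`, a dominant `w = v·t_r` is
minimal exactly when `v r ∈ D_min`, and `v r ∈ Q∨` because `W` preserves `Q∨`.

For the bijection, `w` is dominant iff `v` maps `Π` into the positive system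
`{β | β - (β, v r)δ ∈ Δ̂⁺}`, which depends only on `x = v r`. As `W` acts simply transitively on
positive systems, each `x ∈ Q∨` is `v r` for exactly one dominant `w`: `v` is the element sending
`Π` into the positive system of `x`, and `r = v⁻¹ x`. Existence is the usual descent, a simple
reflection lowering the number of inversions; uniqueness reduces to `u(Π) ⊆ Δ⁺ ⇒ u = 1`, proved by
the deletion argument on words in simple reflections (every reflection is such a word, by induction
on the height).
-/

open scoped RealInnerProductSpace
open Module

noncomputable section

variable {V : Type*} [NormedAddCommGroup V] [InnerProductSpace ℝ V]

/-- The underlying function of the orthogonal reflection in the hyperplane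
orthogonal to `α` (the identity if `α = 0`). -/
def reflFun (α : V) (x : V) : V := x - (2 * ⟪α, x⟫ / ⟪α, α⟫) • α

lemma reflFun_involutive (α : V) : Function.Involutive (reflFun α) := by
  intro x
  by_cases h : α = 0
  · simp [reflFun, h]
  · have hs : ⟪α, α⟫ ≠ 0 := inner_self_ne_zero.mpr h
    have h1 : ⟪α, x - (2 * ⟪α, x⟫ / ⟪α, α⟫) • α⟫ = -⟪α, x⟫ := by
      rw [inner_sub_right, real_inner_smul_right]
      field_simp
      ring
    simp only [reflFun]
    rw [h1, show 2 * -⟪α, x⟫ / ⟪α, α⟫ = -(2 * ⟪α, x⟫ / ⟪α, α⟫) by ring,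
      neg_smul, sub_neg_eq_add]
    abel

/-- The orthogonal reflection in the hyperplane orthogonal to `α`, as a linear
equivalence (the identity if `α = 0`). -/
def sRefl (α : V) : V ≃ₗ[ℝ] V where
  toFun := reflFun α
  map_add' x y := by
    simp only [reflFun, inner_add_right]
    rw [show 2 * (⟪α, x⟫ + ⟪α, y⟫) / ⟪α, α⟫
        = 2 * ⟪α, x⟫ / ⟪α, α⟫ + 2 * ⟪α, y⟫ / ⟪α, α⟫ by ring, add_smul]
    abel
  map_smul' c x := by
    simp only [reflFun, real_inner_smul_right, RingHom.id_apply, smul_sub, smul_smul]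
    congr 2
    ring
  invFun := reflFun α
  left_inv := reflFun_involutive α
  right_inv := reflFun_involutive α

/-- The coroot `α∨ = 2α/(α,α)` of a vector `α`. -/
def corootVec (α : V) : V := (2 / ⟪α, α⟫) • α

/-- The (affine) hyperplane `{x | (x, μ) = k}`. -/
def rootHyperplane (μ : V) (k : ℝ) : Set V := {x : V | ⟪x, μ⟫ = k}

/-- `R` is a region of the hyperplane arrangement whose hyperplanes are encoded by the
pairs `(μ, k) ∈ A` (the hyperplane `{x | (x,μ) = k}`): a connected component of the
complement of the union of the hyperplanes. -/
def IsRegionOf (A : Set (V × ℝ)) (R : Set V) : Prop :=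
  ∃ x ∈ (⋃ h ∈ A, rootHyperplane h.1 h.2)ᶜ,
    R = connectedComponentIn (⋃ h ∈ A, rootHyperplane h.1 h.2)ᶜ x

open Classical in
/-- The characteristic polynomial of the hyperplane arrangement encoded by
`A : Set (V × ℝ)` in an ambient space of dimension `p`, evaluated at `t`, via
Whitney's theorem: `χ(A,t) = ∑ (-1)^{#S} t^{dim ∩ S}`, the sum being over all central
subarrangements `S ⊆ A` (junk value `0` if `A` is infinite). -/
noncomputable def charPolyEval (p : ℕ) (A : Set (V × ℝ)) (t : ℝ) : ℝ :=
  if hA : A.Finite then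
    ∑ S ∈ hA.toFinset.powerset,
      if (⋂ h ∈ (S : Set (V × ℝ)), rootHyperplane h.1 h.2).Nonempty then
        (-1 : ℝ) ^ S.card *
          t ^ (p - Module.finrank ℝ (Submodule.span ℝ (Prod.fst '' (S : Set (V × ℝ)))))
      else 0
  else 0

/-- The linear action of `w = v·t_r ∈ Ŵ` on `V ⊕ ℝδ`:
`w(μ + kδ) = v(μ) + (k - (μ,r))δ`. -/
def affAct (v : V ≃ₗ[ℝ] V) (r : V) (β : V × ℝ) : V × ℝ :=
  (v β.1, β.2 - ⟪β.1, r⟫)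

/-- The linear action of `w⁻¹` on `V ⊕ ℝδ`, for `w = v·t_r ∈ Ŵ`:
`w⁻¹(μ + kδ) = v⁻¹(μ) + (k + (v⁻¹μ, r))δ`. -/
def affActInv (v : V ≃ₗ[ℝ] V) (r : V) (β : V × ℝ) : V × ℝ :=
  (v.symm β.1, β.2 + ⟪v.symm β.1, r⟫)

/-- The affine `∗`-action of `w = v·t_r ∈ Ŵ` on `V`: `w ∗ x = v(x + r)`. -/
def affStar (v : V ≃ₗ[ℝ] V) (r : V) (x : V) : V := v (x + r)

/-- The affine `∗`-action of `w⁻¹` on `V`, for `w = v·t_r ∈ Ŵ`: `w⁻¹ ∗ x = v⁻¹(x) - r`. -/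
def affStarInv (v : V ≃ₗ[ℝ] V) (r : V) (x : V) : V := v.symm x - r

/-- An irreducible reduced crystallographic root system `Δ` of rank `p`, spanning a real
inner product space `V`, together with a choice of positive system `Δ⁺ = pos`, simple
roots `α₁, …, α_p`, and the highest root `θ`. -/
structure RootSystemData (V : Type*) [NormedAddCommGroup V] [InnerProductSpace ℝ V]
    (p : ℕ) where
  /-- the set of roots -/
  Δ : Set V
  finite : Δ.Finite
  zero_notMem : (0 : V) ∉ Δ
  span_eq_top : Submodule.span ℝ Δ = ⊤
  finrank_eq : Module.finrank ℝ V = p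
  neg_mem : ∀ α ∈ Δ, -α ∈ Δ
  /-- reduced: the only multiples of a root that are roots are `±α` -/
  reduced : ∀ α ∈ Δ, ∀ c : ℝ, c • α ∈ Δ → c = 1 ∨ c = -1
  /-- crystallographic: Cartan integers -/
  crystallographic : ∀ α ∈ Δ, ∀ β ∈ Δ, ∃ n : ℤ, 2 * ⟪α, β⟫ / ⟪α, α⟫ = (n : ℝ)
  reflect_mem : ∀ α ∈ Δ, ∀ β ∈ Δ, sRefl α β ∈ Δ
  /-- irreducible: no splitting into two orthogonal parts -/
  irred : ∀ S T : Set V, Δ = S ∪ T → (∀ a ∈ S, ∀ b ∈ T, ⟪a, b⟫ = 0) → S = ∅ ∨ T = ∅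
  /-- the simple roots `α₁, …, α_p` -/
  simpleRoot : Fin p → V
  simpleRoot_mem : ∀ i, simpleRoot i ∈ Δ
  simpleRoot_indep : LinearIndependent ℝ simpleRoot
  /-- the positive roots `Δ⁺` -/
  pos : Set V
  pos_def : pos = {α ∈ Δ | ∃ c : Fin p → ℕ, α = ∑ i, (c i : ℝ) • simpleRoot i}
  pos_or_neg : ∀ α ∈ Δ, α ∈ pos ∨ -α ∈ pos
  /-- the highest root -/
  θ : V
  θ_mem : θ ∈ pos
  θ_highest : ∀ α ∈ pos, ∃ c : Fin p → ℕ, θ = α + ∑ i, (c i : ℝ) • simpleRoot i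

namespace RootSystemData

variable {p : ℕ} (RS : RootSystemData V p)

/-- The coroot lattice `Q∨`, generated by the coroots of the roots. -/
def corootLattice : AddSubgroup V := AddSubgroup.closure (corootVec '' RS.Δ)

/-- The coweight lattice `P∨ = {x | (x, α) ∈ ℤ for all roots α}`. -/
def coweightLattice : AddSubgroup V where
  carrier := {x : V | ∀ α ∈ RS.Δ, ∃ n : ℤ, ⟪x, α⟫ = (n : ℝ)}
  zero_mem' := fun α _ => ⟨0, by simp⟩
  add_mem' := by
    intro x y hx hy α hα
    obtain ⟨n, hn⟩ := hx α hα
    obtain ⟨m, hm⟩ := hy α hα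
    exact ⟨n + m, by rw [inner_add_left, hn, hm]; push_cast; ring⟩
  neg_mem' := by
    intro x hx α hα
    obtain ⟨n, hn⟩ := hx α hα
    exact ⟨-n, by rw [inner_neg_left, hn]; push_cast; ring⟩

/-- The index of connection `f = [P∨ : Q∨]`. -/
noncomputable def indexOfConnection : ℕ :=
  RS.corootLattice.relIndex RS.coweightLattice

/-- The Weyl group `W`, generated by the reflections in the roots. -/
def weylGroup : Subgroup (V ≃ₗ[ℝ] V) :=
  Subgroup.closure {w : V ≃ₗ[ℝ] V | ∃ α ∈ RS.Δ, w = sRefl α}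

/-- The partial order `μ ≼ γ` on roots: `γ - μ` is a nonnegative integer combination of
the simple roots. -/
def rootLe (μ γ : V) : Prop :=
  ∃ c : Fin p → ℕ, γ = μ + ∑ i, (c i : ℝ) • RS.simpleRoot i

/-- An ideal of `Δ⁺`. -/
def IsIdeal (I : Set V) : Prop :=
  I ⊆ RS.pos ∧ ∀ γ ∈ I, ∀ μ ∈ RS.pos, γ + μ ∈ RS.Δ → γ + μ ∈ I

/-- An antichain in the poset `(Δ⁺, ≼)`. -/
def IsRootAntichain (Γ : Set V) : Prop :=
  Γ ⊆ RS.pos ∧ ∀ μ ∈ Γ, ∀ γ ∈ Γ, RS.rootLe μ γ → μ = γ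

/-- The set of minimal elements (generators, for an ideal) of a subset of `Δ⁺`. -/
def gens (I : Set V) : Set V := {γ ∈ I | ∀ μ ∈ I, RS.rootLe μ γ → μ = γ}

/-- The ideal `I⟨Γ⟩` generated by an antichain `Γ`. -/
def idealGen (Γ : Set V) : Set V := {μ ∈ RS.pos | ∃ γ ∈ Γ, RS.rootLe γ μ}

/-- The set `Ξ(I)` of maximal elements of `Δ⁺ \ I`. -/
def XiSet (I : Set V) : Set V :=
  {γ ∈ RS.pos \ I | ∀ μ ∈ RS.pos \ I, RS.rootLe γ μ → γ = μ}

/-- `k(μ, I)`: the minimal number of summands in an expression of `μ` as a sum of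
positive roots not in `I`. -/
noncomputable def kNum (I : Set V) (μ : V) : ℕ :=
  sInf {n : ℕ | ∃ f : Fin n → V, (∀ i, f i ∈ RS.pos \ I) ∧ μ = ∑ i, f i}

/-- A root is short if it is strictly shorter than the highest root `θ`. -/
def IsShort (α : V) : Prop := α ∈ RS.Δ ∧ ⟪α, α⟫ < ⟪RS.θ, RS.θ⟫

/-- The short positive roots `Δ⁺_s`. -/
def shortPos : Set V := {α ∈ RS.pos | ⟪α, α⟫ < ⟪RS.θ, RS.θ⟫}

/-- The long positive roots `Δ⁺_l`. -/
def longPos : Set V := {α ∈ RS.pos | ⟪α, α⟫ = ⟪RS.θ, RS.θ⟫}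

/-- `Δ` has roots of exactly two lengths, the squared length ratio (long over short)
being `ratio`. -/
def LengthRatio (ratio : ℝ) : Prop :=
  ∃ ls : ℝ, 0 < ls ∧ ls < ⟪RS.θ, RS.θ⟫ ∧
    (∀ α ∈ RS.Δ, ⟪α, α⟫ = ls ∨ ⟪α, α⟫ = ⟪RS.θ, RS.θ⟫) ∧
    (∃ α ∈ RS.Δ, ⟪α, α⟫ = ls) ∧ ⟪RS.θ, RS.θ⟫ = ratio * ls

/-- `Δ` has roots of two different lengths. -/
def TwoLengths : Prop := ∃ ratio : ℝ, RS.LengthRatio ratio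

/-- The simple roots `Π(Δ⁺_s)` of the root system `Δ_s` of short roots with respect to
the positive system `Δ⁺_s`: the short positive roots that are not sums of two short
positive roots. -/
def shortSimple : Set V :=
  {α ∈ RS.shortPos | ¬ ∃ β ∈ RS.shortPos, ∃ γ ∈ RS.shortPos, α = β + γ}

/-- The positive affine roots `Δ̂⁺`, an affine root `μ + kδ` being encoded as the pair
`(μ, k)`. -/
def affPos : Set (V × ℝ) :=
  {β : V × ℝ | β.1 ∈ RS.Δ ∧ (0 < β.2 ∨ (β.2 = 0 ∧ β.1 ∈ RS.pos))}

/-- A pair `(v, r)` with `v ∈ W`, `r ∈ Q∨` represents the element `w = v·t_r` of the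
affine Weyl group `Ŵ = W ⋉ Q∨`; it is dominant if `w(α) ∈ Δ̂⁺` for all `α ∈ Π`. -/
def IsDominantPair (v : V ≃ₗ[ℝ] V) (r : V) : Prop :=
  v ∈ RS.weylGroup ∧ r ∈ RS.corootLattice ∧
    ∀ i, affAct v r (RS.simpleRoot i, 0) ∈ RS.affPos

/-- `N(w) = {β ∈ Δ̂⁺ | w(β) ∈ -Δ̂⁺}` for `w = v·t_r`. -/
def Nset (v : V ≃ₗ[ℝ] V) (r : V) : Set (V × ℝ) :=
  {β : V × ℝ | β ∈ RS.affPos ∧ -(affAct v r β) ∈ RS.affPos}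

/-- The first layer ideal `I_w = {μ ∈ Δ⁺ | δ - μ ∈ N(w)}` of `w = v·t_r`. -/
def firstLayerIdeal (v : V ≃ₗ[ℝ] V) (r : V) : Set V :=
  {μ ∈ RS.pos | ((-μ, (1 : ℝ)) : V × ℝ) ∈ RS.Nset v r}

/-- `w = v·t_r` is minimal: dominant, and for every affine simple root `α ∈ Π̂`,
writing `w⁻¹(α) = kδ + μ`, one has `k ≥ -1`. -/
def IsMinimalPair (v : V ≃ₗ[ℝ] V) (r : V) : Prop :=
  RS.IsDominantPair v r ∧
    (∀ i, -1 ≤ (affActInv v r (RS.simpleRoot i, 0)).2) ∧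
    -1 ≤ (affActInv v r (-RS.θ, 1)).2

/-- `w = v·t_r` is maximal: dominant, and for every affine simple root `α ∈ Π̂`,
writing `w⁻¹(α) = kδ + μ`, one has `k ≤ 1`. -/
def IsMaximalPair (v : V ≃ₗ[ℝ] V) (r : V) : Prop :=
  RS.IsDominantPair v r ∧
    (∀ i, (affActInv v r (RS.simpleRoot i, 0)).2 ≤ 1) ∧
    (affActInv v r (-RS.θ, 1)).2 ≤ 1

/-- `w = v·t_r` is `s`-minimal: dominant, `k ≥ -1` for short simple `α`, and `k ≥ 0`
for `α ∈ Π̂_l = Π_l ∪ {α₀}`, where `w⁻¹(α) = kδ + μ`. -/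
def IsSMinimalPair (v : V ≃ₗ[ℝ] V) (r : V) : Prop :=
  RS.IsDominantPair v r ∧
    (∀ i, RS.IsShort (RS.simpleRoot i) →
      -1 ≤ (affActInv v r (RS.simpleRoot i, 0)).2) ∧
    (∀ i, ¬ RS.IsShort (RS.simpleRoot i) →
      0 ≤ (affActInv v r (RS.simpleRoot i, 0)).2) ∧
    0 ≤ (affActInv v r (-RS.θ, 1)).2

/-- `w = v·t_r` is `s`-maximal: dominant, `k ≤ 1` for short simple `α`, and `k ≤ 0`
for `α ∈ Π̂_l = Π_l ∪ {α₀}`, where `w⁻¹(α) = kδ + μ`. -/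
def IsSMaximalPair (v : V ≃ₗ[ℝ] V) (r : V) : Prop :=
  RS.IsDominantPair v r ∧
    (∀ i, RS.IsShort (RS.simpleRoot i) →
      (affActInv v r (RS.simpleRoot i, 0)).2 ≤ 1) ∧
    (∀ i, ¬ RS.IsShort (RS.simpleRoot i) →
      (affActInv v r (RS.simpleRoot i, 0)).2 ≤ 0) ∧
    (affActInv v r (-RS.θ, 1)).2 ≤ 0

/-- The open fundamental Weyl chamber `C`. -/
def chamber : Set V := {x : V | ∀ i, 0 < ⟪x, RS.simpleRoot i⟫}

/-- The open fundamental alcove `A`. -/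
def alcove : Set V := {x : V | (∀ i, 0 < ⟪x, RS.simpleRoot i⟫) ∧ ⟪x, RS.θ⟫ < 1}

/-- The affine arrangement of all hyperplanes `{x | (x,μ) = k}`, `μ ∈ Δ⁺`, `k ∈ ℤ`,
whose regions are the alcoves. -/
def affineArrangement : Set (V × ℝ) :=
  {h : V × ℝ | h.1 ∈ RS.pos ∧ ∃ k : ℤ, h.2 = (k : ℝ)}

/-- The dominant region `R_I` of the Catalan (equivalently, Shi) arrangement attached
to an ideal `I ⊆ Δ⁺` under the Shi bijection. -/
def regionOfIdeal (I : Set V) : Set V :=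
  {x ∈ RS.chamber | (∀ γ ∈ I, 1 < ⟪x, γ⟫) ∧ ∀ γ ∈ RS.pos \ I, ⟪x, γ⟫ < 1}

/-- The semi-Catalan arrangement `Cat_s(Δ)`. -/
def semiCatalan : Set (V × ℝ) :=
  {h : V × ℝ | h.1 ∈ RS.shortPos ∧ (h.2 = -1 ∨ h.2 = 0 ∨ h.2 = 1)} ∪
    {h : V × ℝ | h.1 ∈ RS.longPos ∧ h.2 = 0}

/-- The `m`-semi-Catalan arrangement `Cat_s^m(Δ)`. -/
def semiCatalanM (m : ℕ) : Set (V × ℝ) :=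
  {h : V × ℝ | h.1 ∈ RS.shortPos ∧ ∃ k : ℤ, |k| ≤ (m : ℤ) ∧ h.2 = (k : ℝ)} ∪
    {h : V × ℝ | h.1 ∈ RS.longPos ∧ h.2 = 0}

/-- The region `R_Γ^(s)` of the semi-Catalan arrangement attached to a short
antichain `Γ`. -/
def sRegion (Γ : Set V) : Set V :=
  {x ∈ RS.chamber | (∀ μ ∈ RS.idealGen Γ ∩ RS.shortPos, 1 < ⟪x, μ⟫) ∧
    ∀ μ ∈ RS.shortPos \ RS.idealGen Γ, ⟪x, μ⟫ < 1}

/-- `α` has height `n` (sum of the coefficients over the simple roots). -/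
def heightIs (α : V) (n : ℕ) : Prop :=
  ∃ c : Fin p → ℕ, α = ∑ i, (c i : ℝ) • RS.simpleRoot i ∧ ∑ i, c i = n

/-- `e` enumerates the exponents `e₁, …, e_p` of the Weyl group `W`, characterized by the
Shapiro–Kostant–Steinberg property: for every `k ≥ 1`, the number of positive roots of
height `k` equals the number of exponents that are `≥ k`. -/
def IsExponents (e : Fin p → ℕ) : Prop :=
  ∀ k : ℕ, 1 ≤ k →
    {α ∈ RS.pos | RS.heightIs α k}.ncard = {i : Fin p | k ≤ e i}.ncard

/-- `h` is the Coxeter number of `W`, characterized by `#Δ = p·h`. -/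
def IsCoxeterNumber (h : ℕ) : Prop := RS.Δ.ncard = p * h

open Classical in
/-- `g` is the sum of the coefficients of the short simple roots in the expression
`θ = Σ cᵢ αᵢ` of the highest root. -/
def IsShortCoeffSum (g : ℕ) : Prop :=
  ∃ c : Fin p → ℕ, RS.θ = ∑ i, (c i : ℝ) • RS.simpleRoot i ∧
    (∑ i, if RS.IsShort (RS.simpleRoot i) then c i else 0) = g

open Classical in
/-- The number of constraints of the simplex
`D_max = {x | (x,αᵢ) ≤ 1 ∀i, (x,θ) ≥ 0}` that are active (hold with equality) at `x`;
for `x ∈ D_max` this is the codimension of the face of `D_max` containing `x`. -/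
noncomputable def dmaxFaceCodim (x : V) : ℕ :=
  {i : Fin p | ⟪x, RS.simpleRoot i⟫ = 1}.ncard + (if ⟪x, RS.θ⟫ = 0 then 1 else 0)

end RootSystemData

lemma sRefl_apply (α x : V) : sRefl α x = x - (2 * ⟪α, x⟫ / ⟪α, α⟫) • α := rfl

lemma sRefl_neg (α : V) : sRefl (-α) = sRefl α := by
  ext x
  simp only [sRefl_apply, inner_neg_left, inner_neg_right, neg_neg, smul_neg, mul_neg,
    neg_div, neg_smul]

lemma sRefl_inv (α : V) : (sRefl α)⁻¹ = sRefl α := rfl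

lemma sRefl_mul_self (α : V) : sRefl α * sRefl α = 1 :=
  LinearEquiv.ext (reflFun_involutive α)

lemma sRefl_self {α : V} (h : α ≠ 0) : sRefl α α = -α := by
  rw [sRefl_apply, mul_div_assoc, div_self (inner_self_ne_zero.mpr h), mul_one, two_smul]
  abel

lemma inner_sRefl_sRefl (α x y : V) : ⟪sRefl α x, sRefl α y⟫ = ⟪x, y⟫ := by
  rcases eq_or_ne α 0 with rfl | h
  · simp [sRefl_apply]
  have hα : ⟪α, α⟫ ≠ 0 := inner_self_ne_zero.mpr h
  simp only [sRefl_apply, inner_sub_left, inner_sub_right, real_inner_smul_left,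
    real_inner_smul_right, real_inner_comm α x]
  field_simp
  ring

lemma mul_sRefl_mul_inv {c : V ≃ₗ[ℝ] V} (hc : ∀ x y, ⟪c x, c y⟫ = ⟪x, y⟫) (α : V) :
    c * sRefl α * c⁻¹ = sRefl (c α) := by
  ext x
  change c (sRefl α (c.symm x)) = sRefl (c α) x
  have hx : ⟪α, c.symm x⟫ = ⟪c α, x⟫ := by rw [← hc, c.apply_symm_apply]
  rw [sRefl_apply, sRefl_apply, hx, hc, map_sub, map_smul, c.apply_symm_apply]

namespace RootSystemData

variable {p : ℕ} {RS : RootSystemData V p}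

lemma ne_zero_of_mem {α : V} (hα : α ∈ RS.Δ) : α ≠ 0 :=
  fun h => RS.zero_notMem (h ▸ hα)

lemma pos_subset : RS.pos ⊆ RS.Δ := by
  rw [RS.pos_def]
  exact fun _ h => h.1

lemma mem_span_simpleRoot {α : V} (hα : α ∈ RS.Δ) :
    α ∈ Submodule.span ℝ (Set.range RS.simpleRoot) := by
  have hpos : ∀ β ∈ RS.pos, β ∈ Submodule.span ℝ (Set.range RS.simpleRoot) := by
    rw [RS.pos_def]
    rintro _ ⟨_, c, rfl⟩
    exact Submodule.sum_mem _ fun i _ => Submodule.smul_mem _ _ (Submodule.subset_span ⟨i, rfl⟩)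
  rcases RS.pos_or_neg α hα with h | h
  · exact hpos α h
  · simpa using Submodule.neg_mem _ (hpos _ h)

variable (RS) in
def simpleBasis : Basis (Fin p) ℝ V :=
  Basis.mk RS.simpleRoot_indep <| by
    rw [← RS.span_eq_top]
    exact Submodule.span_le.2 fun α hα => mem_span_simpleRoot hα

@[simp]
lemma simpleBasis_apply (i : Fin p) : RS.simpleBasis i = RS.simpleRoot i :=
  Basis.mk_apply _ _ _

variable (RS) in
def height : V →ₗ[ℝ] ℝ := ∑ i, RS.simpleBasis.coord i

lemma height_apply (x : V) : RS.height x = ∑ i, RS.simpleBasis.repr x i := by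
  simp [height]

@[simp]
lemma height_simpleRoot (i : Fin p) : RS.height (RS.simpleRoot i) = 1 := by
  simp [height_apply, ← simpleBasis_apply, Finsupp.single_apply]

lemma repr_nonneg_of_mem_pos {β : V} (hβ : β ∈ RS.pos) (j : Fin p) :
    0 ≤ RS.simpleBasis.repr β j := by
  rw [RS.pos_def] at hβ
  obtain ⟨_, c, rfl⟩ := hβ
  simp_rw [← simpleBasis_apply, Basis.repr_sum_self]
  exact Nat.cast_nonneg _

lemma repr_nonpos_of_notMem_pos {β : V} (hβ : β ∈ RS.Δ) (hβ' : β ∉ RS.pos) (j : Fin p) :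
    RS.simpleBasis.repr β j ≤ 0 := by
  simpa using repr_nonneg_of_mem_pos ((RS.pos_or_neg β hβ).resolve_left hβ') j

lemma height_pos {β : V} (hβ : β ∈ RS.pos) : 0 < RS.height β := by
  rw [height_apply]
  refine (Finset.sum_nonneg fun j _ => repr_nonneg_of_mem_pos hβ j).lt_of_ne fun h => ?_
  have hzero := (Finset.sum_eq_zero_iff_of_nonneg fun j _ => repr_nonneg_of_mem_pos hβ j).1 h.symm
  refine ne_zero_of_mem (pos_subset hβ) (RS.simpleBasis.ext_elem fun j => ?_)
  simpa using hzero j (Finset.mem_univ j)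

lemma mem_pos_of_repr_pos {β : V} (hβ : β ∈ RS.Δ) {j : Fin p}
    (h : 0 < RS.simpleBasis.repr β j) : β ∈ RS.pos := by
  by_contra hβ'
  exact h.not_ge (repr_nonpos_of_notMem_pos hβ hβ' j)

lemma mem_pos_iff_height_pos {β : V} (hβ : β ∈ RS.Δ) : β ∈ RS.pos ↔ 0 < RS.height β := by
  refine ⟨height_pos, fun h => by_contra fun hβ' => h.not_ge ?_⟩
  rw [height_apply]
  exact Finset.sum_nonpos fun j _ => repr_nonpos_of_notMem_pos hβ hβ' j

lemma height_ne_zero {β : V} (hβ : β ∈ RS.Δ) : RS.height β ≠ 0 := by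
  rcases RS.pos_or_neg β hβ with h | h
  · exact (height_pos h).ne'
  · simpa using (height_pos h).ne'

lemma neg_notMem_pos {β : V} (hβ : β ∈ RS.pos) : -β ∉ RS.pos := fun h => by
  have := height_pos h
  rw [map_neg] at this
  linarith [height_pos hβ]

lemma simpleRoot_mem_pos (i : Fin p) : RS.simpleRoot i ∈ RS.pos :=
  (mem_pos_iff_height_pos (RS.simpleRoot_mem i)).2 (by simp)

lemma sRefl_simpleRoot_mem_pos {i : Fin p} {β : V} (hβ : β ∈ RS.pos)
    (hne : β ≠ RS.simpleRoot i) : sRefl (RS.simpleRoot i) β ∈ RS.pos := by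
  obtain ⟨j, hji, hj⟩ : ∃ j ≠ i, 0 < RS.simpleBasis.repr β j := by
    by_contra! h
    have hβi : β = RS.simpleBasis.repr β i • RS.simpleRoot i := by
      conv_lhs => rw [← RS.simpleBasis.sum_repr β]
      rw [Fintype.sum_eq_single i, simpleBasis_apply]
      intro j hji
      rw [le_antisymm (h j hji) (repr_nonneg_of_mem_pos hβ j), zero_smul]
    rcases RS.reduced _ (RS.simpleRoot_mem i) _ (hβi ▸ pos_subset hβ) with h1 | h1
    · exact hne (by rw [hβi, h1, one_smul])
    · linarith [repr_nonneg_of_mem_pos hβ i]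
  refine mem_pos_of_repr_pos (RS.reflect_mem _ (RS.simpleRoot_mem i) _ (pos_subset hβ))
    (j := j) ?_
  simpa [sRefl_apply, ← simpleBasis_apply, Finsupp.single_apply, hji.symm] using hj

lemma exists_inner_simpleRoot_pos {β : V} (hβ : β ∈ RS.pos) :
    ∃ i, 0 < ⟪RS.simpleRoot i, β⟫ := by
  by_contra! h
  refine ne_zero_of_mem (pos_subset hβ) (real_inner_self_nonpos.1 ?_)
  nth_rewrite 1 [← RS.simpleBasis.sum_repr β]
  rw [sum_inner]
  refine Finset.sum_nonpos fun i _ => ?_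
  rw [real_inner_smul_left, simpleBasis_apply]
  exact mul_nonpos_of_nonneg_of_nonpos (repr_nonneg_of_mem_pos hβ i) (h i)

variable (RS) in
def wordProd (l : List (Fin p)) : V ≃ₗ[ℝ] V :=
  (l.map fun i => sRefl (RS.simpleRoot i)).prod

@[simp]
lemma wordProd_nil : RS.wordProd [] = 1 := rfl

@[simp]
lemma wordProd_cons (i : Fin p) (l : List (Fin p)) :
    RS.wordProd (i :: l) = sRefl (RS.simpleRoot i) * RS.wordProd l := by
  simp [wordProd]

@[simp]
lemma wordProd_append (l l' : List (Fin p)) :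
    RS.wordProd (l ++ l') = RS.wordProd l * RS.wordProd l' := by
  simp [wordProd]

lemma sRefl_simpleRoot_mem_weylGroup (i : Fin p) : sRefl (RS.simpleRoot i) ∈ RS.weylGroup :=
  Subgroup.subset_closure ⟨_, RS.simpleRoot_mem i, rfl⟩

lemma wordProd_mem_weylGroup (l : List (Fin p)) : RS.wordProd l ∈ RS.weylGroup := by
  induction l with
  | nil => exact RS.weylGroup.one_mem
  | cons i l ih => exact RS.weylGroup.mul_mem (sRefl_simpleRoot_mem_weylGroup i) ih

lemma exists_wordProd_eq_sRefl {β : V} (hβ : β ∈ RS.pos) : ∃ l, sRefl β = RS.wordProd l := by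
  obtain ⟨n, hn⟩ := exists_nat_gt (RS.height β)
  induction n generalizing β with
  | zero => exact absurd hn (by simpa using (height_pos hβ).le)
  | succ n ih =>
    obtain ⟨i, hi⟩ := exists_inner_simpleRoot_pos hβ
    by_cases hne : β = RS.simpleRoot i
    · exact ⟨[i], by simp [hne]⟩
    set s := sRefl (RS.simpleRoot i)
    obtain ⟨m, hm⟩ := RS.crystallographic _ (RS.simpleRoot_mem i) β (pos_subset hβ)
    have hm1 : (1 : ℝ) ≤ m := by
      have : (0 : ℝ) < m := hm ▸ div_pos (by linarith)
        (real_inner_self_pos.2 (ne_zero_of_mem (RS.simpleRoot_mem i)))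
      exact_mod_cast (Int.cast_pos.1 this : 0 < m)
    have hheight : RS.height (s β) = RS.height β - m := by
      rw [sRefl_apply, map_sub, map_smul, height_simpleRoot, hm, smul_eq_mul, mul_one]
    obtain ⟨l, hl⟩ := ih (sRefl_simpleRoot_mem_pos hβ hne) (by push_cast at hn; linarith)
    have hconj : sRefl β = s * sRefl (s β) * s := by
      rw [← mul_sRefl_mul_inv (inner_sRefl_sRefl _), sRefl_inv]
      simp only [s, ← mul_assoc, sRefl_mul_self, one_mul]
      rw [mul_assoc, sRefl_mul_self, mul_one]
    exact ⟨i :: (l ++ [i]), by simp [hconj, hl, s, mul_assoc]⟩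

lemma exists_wordProd_eq_of_mem_weylGroup {v : V ≃ₗ[ℝ] V} (hv : v ∈ RS.weylGroup) :
    ∃ l, v = RS.wordProd l := by
  have hrefl : ∀ α ∈ RS.Δ, ∃ l, sRefl α = RS.wordProd l := fun α hα =>
    (RS.pos_or_neg α hα).elim exists_wordProd_eq_sRefl
      fun h => sRefl_neg α ▸ exists_wordProd_eq_sRefl h
  induction hv using Subgroup.closure_induction'' with
  | mem _ h => obtain ⟨α, hα, rfl⟩ := h; exact hrefl α hα
  | inv_mem _ h => obtain ⟨α, hα, rfl⟩ := h; exact hrefl α hα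
  | one => exact ⟨[], rfl⟩
  | mul _ _ _ _ hx hy =>
    obtain ⟨l, rfl⟩ := hx
    obtain ⟨l', rfl⟩ := hy
    exact ⟨l ++ l', (wordProd_append l l').symm⟩

lemma inner_map_map_of_mem_weylGroup {v : V ≃ₗ[ℝ] V} (hv : v ∈ RS.weylGroup) (x y : V) :
    ⟪v x, v y⟫ = ⟪x, y⟫ := by
  induction hv using Subgroup.closure_induction'' generalizing x y with
  | mem _ h => obtain ⟨α, -, rfl⟩ := h; exact inner_sRefl_sRefl α x y
  | inv_mem _ h => obtain ⟨α, -, rfl⟩ := h; exact inner_sRefl_sRefl α x y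
  | one => rfl
  | mul _ _ _ _ hv hw => exact (hv _ _).trans (hw x y)

lemma map_mem_of_mem_weylGroup {v : V ≃ₗ[ℝ] V} (hv : v ∈ RS.weylGroup) {α : V}
    (hα : α ∈ RS.Δ) : v α ∈ RS.Δ := by
  induction hv using Subgroup.closure_induction'' generalizing α with
  | mem _ h => obtain ⟨β, hβ, rfl⟩ := h; exact RS.reflect_mem β hβ α hα
  | inv_mem _ h => obtain ⟨β, hβ, rfl⟩ := h; exact RS.reflect_mem β hβ α hα
  | one => exact hα
  | mul _ _ _ _ hv hw => exact hv (hw hα)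

lemma map_mem_corootLattice {v : V ≃ₗ[ℝ] V} (hv : v ∈ RS.weylGroup) {r : V}
    (hr : r ∈ RS.corootLattice) : v r ∈ RS.corootLattice := by
  suffices RS.corootLattice.map v.toLinearMap.toAddMonoidHom ≤ RS.corootLattice from
    this ⟨r, hr, rfl⟩
  rw [corootLattice, AddMonoidHom.map_closure]
  refine AddSubgroup.closure_mono ?_
  rintro _ ⟨_, ⟨α, hα, rfl⟩, rfl⟩
  refine ⟨v α, map_mem_of_mem_weylGroup hv hα, ?_⟩
  change corootVec (v α) = v (corootVec α)
  rw [corootVec, corootVec, map_smul, inner_map_map_of_mem_weylGroup hv]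

variable (RS) in
/-- A positive system of `Δ`: the roots `β` with `β - (β, x)δ ∈ Δ̂⁺`. -/
def posAt (x : V) : Set V := {β | (β, -⟪β, x⟫) ∈ RS.affPos}

lemma mem_posAt_iff {x β : V} :
    β ∈ RS.posAt x ↔ β ∈ RS.Δ ∧ (⟪β, x⟫ < 0 ∨ ⟪β, x⟫ = 0 ∧ β ∈ RS.pos) := by
  simp only [posAt, affPos, Set.mem_ofPred_eq, neg_pos, neg_eq_zero]

lemma neg_notMem_posAt {x β : V} (hβ : β ∈ RS.posAt x) : -β ∉ RS.posAt x := by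
  rw [mem_posAt_iff] at hβ ⊢
  rw [inner_neg_left]
  rintro ⟨-, h | ⟨h, hneg⟩⟩ <;> rcases hβ with ⟨-, hβ | ⟨hβ, hpos⟩⟩
  all_goals first | linarith | exact neg_notMem_pos hpos hneg

lemma mem_posAt_or_neg_mem {x β : V} (hβ : β ∈ RS.Δ) : β ∈ RS.posAt x ∨ -β ∈ RS.posAt x := by
  simp only [mem_posAt_iff, inner_neg_left, neg_neg_iff_pos, neg_eq_zero, RS.neg_mem β hβ, hβ,
    true_and]
  rcases lt_trichotomy ⟪β, x⟫ 0 with h | h | h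
  · exact Or.inl (Or.inl h)
  · exact (RS.pos_or_neg β hβ).imp (fun hp => Or.inr ⟨h, hp⟩) fun hp => Or.inr ⟨h, hp⟩
  · exact Or.inr (Or.inl h)

lemma mem_posAt_of_eq_sum {ι : Type*} [Fintype ι] {x β : V} (hβ : β ∈ RS.Δ) {c : ι → ℝ}
    (hc : ∀ i, 0 ≤ c i) {γ : ι → V} (hγ : ∀ i, γ i ∈ RS.posAt x) (h : β = ∑ i, c i • γ i) :
    β ∈ RS.posAt x := by
  have hterm : ∀ i, c i * ⟪γ i, x⟫ ≤ 0 := fun i => by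
    rcases (mem_posAt_iff.1 (hγ i)).2 with h | ⟨h, -⟩
    · exact mul_nonpos_of_nonneg_of_nonpos (hc i) h.le
    · rw [h, mul_zero]
  have hinner : ⟪β, x⟫ = ∑ i, c i * ⟪γ i, x⟫ := by simp [h, sum_inner, real_inner_smul_left]
  refine mem_posAt_iff.2 ⟨hβ, (hinner ▸ Finset.sum_nonpos fun i _ => hterm i).lt_or_eq.imp_right
    fun h0 => ⟨h0, (mem_pos_iff_height_pos hβ).2 ?_⟩⟩
  -- on `x⊥` every `γ i` with `c i ≠ 0` lies in `Δ⁺`, so `β` has height `≥ 0`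
  have hvanish := (Finset.sum_eq_zero_iff_of_nonpos fun i _ => hterm i).1 (hinner ▸ h0)
  have hheight : 0 ≤ RS.height β := by
    rw [h, map_sum]
    refine Finset.sum_nonneg fun i hi => ?_
    rw [map_smul, smul_eq_mul]
    rcases (mul_eq_zero.1 (hvanish i hi)) with hci | hi0
    · rw [hci, zero_mul]
    · rcases (mem_posAt_iff.1 (hγ i)).2 with h | ⟨-, hpos⟩
      · exact absurd hi0 h.ne
      · exact mul_nonneg (hc i) (height_pos hpos).le
  exact hheight.lt_of_ne (height_ne_zero hβ).symm

lemma map_mem_posAt_of_mem_pos {v : V ≃ₗ[ℝ] V} (hv : v ∈ RS.weylGroup) {x : V}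
    (h : ∀ i, v (RS.simpleRoot i) ∈ RS.posAt x) {β : V} (hβ : β ∈ RS.pos) : v β ∈ RS.posAt x :=
  mem_posAt_of_eq_sum (map_mem_of_mem_weylGroup hv (pos_subset hβ))
    (repr_nonneg_of_mem_pos hβ) h <| by
      conv_lhs => rw [← RS.simpleBasis.sum_repr β]
      simp

lemma isDominantPair_iff {v : V ≃ₗ[ℝ] V} {r : V} :
    RS.IsDominantPair v r ↔ v ∈ RS.weylGroup ∧ r ∈ RS.corootLattice ∧
      ∀ i, v (RS.simpleRoot i) ∈ RS.posAt (v r) := by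
  refine and_congr_right fun hv => and_congr_right fun _ => forall_congr' fun i => ?_
  simp only [affAct, posAt, Set.mem_ofPred_eq, zero_sub, inner_map_map_of_mem_weylGroup hv]

lemma exists_append_cons_of_neg_mem_pos {l : List (Fin p)} {j : Fin p}
    (h : -RS.wordProd l (RS.simpleRoot j) ∈ RS.pos) :
    ∃ a t b, l = a ++ t :: b ∧ RS.wordProd b (RS.simpleRoot j) = RS.simpleRoot t := by
  induction l with
  | nil => exact absurd h (neg_notMem_pos (simpleRoot_mem_pos j))
  | cons i l ih =>
    by_cases hl : -RS.wordProd l (RS.simpleRoot j) ∈ RS.pos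
    · obtain ⟨a, t, b, rfl, hb⟩ := ih hl
      exact ⟨i :: a, t, b, rfl, hb⟩
    refine ⟨[], i, l, rfl, by_contra fun hne => ?_⟩
    have hpos := (RS.pos_or_neg _ (map_mem_of_mem_weylGroup (wordProd_mem_weylGroup l)
      (RS.simpleRoot_mem j))).resolve_right hl
    exact neg_notMem_pos (sRefl_simpleRoot_mem_pos hpos hne) h

lemma wordProd_eq_one_of_forall_mem_pos (l : List (Fin p))
    (h : ∀ i, RS.wordProd l (RS.simpleRoot i) ∈ RS.pos) : RS.wordProd l = 1 := by
  induction hn : l.length using Nat.strong_induction_on generalizing l with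
  | _ n ih =>
  rcases l.eq_nil_or_concat with rfl | ⟨l, j, rfl⟩
  · rfl
  have hj : -RS.wordProd l (RS.simpleRoot j) ∈ RS.pos := by
    simpa [wordProd, sRefl_self (ne_zero_of_mem (RS.simpleRoot_mem j))] using h j
  obtain ⟨a, t, b, rfl, hb⟩ := exists_append_cons_of_neg_mem_pos hj
  -- `s_t = b s_j b⁻¹`, so the letters `t` and `j` cancel
  have hswap :
      sRefl (RS.simpleRoot t) * RS.wordProd b = RS.wordProd b * sRefl (RS.simpleRoot j) := by
    rw [← hb, ← mul_sRefl_mul_inv (inner_map_map_of_mem_weylGroup (wordProd_mem_weylGroup b)),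
      inv_mul_cancel_right]
  have hdel : RS.wordProd ((a ++ t :: b) ++ [j]) = RS.wordProd (a ++ b) := by
    simp only [wordProd_append, wordProd_cons, wordProd_nil, mul_one, mul_assoc]
    rw [← mul_assoc (sRefl _), hswap, mul_assoc, sRefl_mul_self, mul_one]
  rw [List.concat_eq_append, hdel] at h ⊢
  refine ih _ ?_ _ h rfl
  simp only [List.concat_eq_append, List.length_append, List.length_cons, List.length_nil] at hn ⊢
  omega

lemma eq_one_of_forall_mem_pos {u : V ≃ₗ[ℝ] V} (hu : u ∈ RS.weylGroup)
    (h : ∀ i, u (RS.simpleRoot i) ∈ RS.pos) : u = 1 := by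
  obtain ⟨l, rfl⟩ := exists_wordProd_eq_of_mem_weylGroup hu
  exact wordProd_eq_one_of_forall_mem_pos l h

lemma eq_of_forall_mem_posAt {v v' : V ≃ₗ[ℝ] V} (hv : v ∈ RS.weylGroup)
    (hv' : v' ∈ RS.weylGroup) {x : V} (h : ∀ i, v (RS.simpleRoot i) ∈ RS.posAt x)
    (h' : ∀ i, v' (RS.simpleRoot i) ∈ RS.posAt x) : v = v' := by
  have hu : v'⁻¹ * v ∈ RS.weylGroup := RS.weylGroup.mul_mem (RS.weylGroup.inv_mem hv') hv
  suffices v'⁻¹ * v = 1 from (inv_mul_eq_one.1 this).symm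
  refine eq_one_of_forall_mem_pos hu fun i => by_contra fun hi => ?_
  have hneg := (RS.pos_or_neg _ (map_mem_of_mem_weylGroup hu (RS.simpleRoot_mem i))).resolve_left hi
  have := map_mem_posAt_of_mem_pos hv' h' hneg
  rw [map_neg] at this
  exact neg_notMem_posAt (h i) (by simpa using this)

variable (RS) in
def inversionSet (x : V) (v : V ≃ₗ[ℝ] V) : Set V := {β ∈ RS.pos | v β ∉ RS.posAt x}

lemma ncard_inversionSet_mul_sRefl_lt {v : V ≃ₗ[ℝ] V} (hv : v ∈ RS.weylGroup) {x : V}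
    {i : Fin p} (hi : v (RS.simpleRoot i) ∉ RS.posAt x) :
    (RS.inversionSet x (v * sRefl (RS.simpleRoot i))).ncard < (RS.inversionSet x v).ncard := by
  set s := sRefl (RS.simpleRoot i)
  have hfin : (RS.inversionSet x v).Finite := RS.finite.subset fun β h => pos_subset h.1
  have hsi : s (RS.simpleRoot i) = -RS.simpleRoot i :=
    sRefl_self (ne_zero_of_mem (RS.simpleRoot_mem i))
  refine lt_of_le_of_lt ?_ (Set.ncard_sdiff_singleton_lt_of_mem ⟨simpleRoot_mem_pos i, hi⟩ hfin)
  refine Set.ncard_le_ncard_of_injOn s ?_ s.injective.injOn hfin.sdiff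
  rintro β ⟨hβ, hvβ⟩
  have hne : β ≠ RS.simpleRoot i := by
    rintro rfl
    refine hvβ ?_
    change v (s _) ∈ _
    rw [hsi, map_neg]
    exact (mem_posAt_or_neg_mem (map_mem_of_mem_weylGroup hv (RS.simpleRoot_mem i))).resolve_left hi
  refine ⟨⟨sRefl_simpleRoot_mem_pos hβ hne, hvβ⟩, fun (h : s β = _) => ?_⟩
  have : β = -RS.simpleRoot i := by rw [← reflFun_involutive _ β]; exact (congrArg s h).trans hsi
  exact neg_notMem_pos (simpleRoot_mem_pos i) (this ▸ hβ)

lemma exists_mem_weylGroup_forall_mem_posAt (x : V) :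
    ∃ v ∈ RS.weylGroup, ∀ i, v (RS.simpleRoot i) ∈ RS.posAt x := by
  obtain ⟨v, hv, hmin⟩ := (measure fun v => (RS.inversionSet x v).ncard).wf.has_min
    RS.weylGroup ⟨1, RS.weylGroup.one_mem⟩
  exact ⟨v, hv, fun i => by_contra fun hi => hmin _
    (RS.weylGroup.mul_mem hv (sRefl_simpleRoot_mem_weylGroup i))
    (ncard_inversionSet_mul_sRefl_lt hv hi)⟩

lemma bijOn_isDominantPair :
    Set.BijOn (fun vr : (V ≃ₗ[ℝ] V) × V => vr.1 vr.2)
      {vr | RS.IsDominantPair vr.1 vr.2} RS.corootLattice := by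
  refine ⟨fun vr hvr => map_mem_corootLattice hvr.1 hvr.2.1, ?_, ?_⟩
  · rintro ⟨v, r⟩ hvr ⟨v', r'⟩ hvr' (hx : v r = v' r')
    obtain ⟨hv, -, h⟩ := isDominantPair_iff.1 hvr
    obtain ⟨hv', -, h'⟩ := isDominantPair_iff.1 hvr'
    obtain rfl := eq_of_forall_mem_posAt hv hv' (hx ▸ h) h'
    exact Prod.ext rfl (v.injective hx)
  · intro x hx
    obtain ⟨v, hv, h⟩ := exists_mem_weylGroup_forall_mem_posAt (RS := RS) x
    refine ⟨(v, v.symm x), isDominantPair_iff.2 ⟨hv, ?_, ?_⟩, v.apply_symm_apply x⟩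
    · exact map_mem_corootLattice (RS.weylGroup.inv_mem hv) hx
    · simpa using h

lemma isMinimalPair_iff {v : V ≃ₗ[ℝ] V} {r : V} :
    RS.IsMinimalPair v r ↔ RS.IsDominantPair v r ∧
      (∀ i, -1 ≤ ⟪v r, RS.simpleRoot i⟫) ∧ ⟪v r, RS.θ⟫ ≤ 2 := by
  refine and_congr_right fun hd => ?_
  have key (a : V) : ⟪v.symm a, r⟫ = ⟪v r, a⟫ := by
    rw [← inner_map_map_of_mem_weylGroup hd.1, v.apply_symm_apply, real_inner_comm]
  simp only [affActInv, map_neg, inner_neg_left, key, zero_add]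
  exact and_congr_right fun _ => by constructor <;> intro h <;> linarith

end RootSystemData

/-- Let `D_min = {x ∈ V : (x,α) ≥ −1 ∀ α ∈ Π and (x,θ) ≤ 2}`. Then:
(1) `w = v·t_r ∈ Ŵ` is minimal iff `w` is dominant and `v(r) ∈ D_min ∩ Q∨`;
(2) the map `Ŵ_min → D_min ∩ Q∨` sending `w = v·t_r` to `v(r)` is a bijection. -/
theorem statement1 {V : Type*} [NormedAddCommGroup V] [InnerProductSpace ℝ V] {p : ℕ}
    (RS : RootSystemData V p) :
    (∀ (v : V ≃ₗ[ℝ] V) (r : V),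
      RS.IsMinimalPair v r ↔ RS.IsDominantPair v r ∧
        v r ∈ {x : V | (∀ i, -1 ≤ ⟪x, RS.simpleRoot i⟫) ∧ ⟪x, RS.θ⟫ ≤ 2} ∩
          (RS.corootLattice : Set V)) ∧
    Set.BijOn (fun vr : (V ≃ₗ[ℝ] V) × V => vr.1 vr.2)
      {vr : (V ≃ₗ[ℝ] V) × V | RS.IsMinimalPair vr.1 vr.2}
      ({x : V | (∀ i, -1 ≤ ⟪x, RS.simpleRoot i⟫) ∧ ⟪x, RS.θ⟫ ≤ 2} ∩
        (RS.corootLattice : Set V)) := by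
  set Dmin := {x : V | (∀ i, -1 ≤ ⟪x, RS.simpleRoot i⟫) ∧ ⟪x, RS.θ⟫ ≤ 2}
  have hmin (v : V ≃ₗ[ℝ] V) (r : V) :
      RS.IsMinimalPair v r ↔ RS.IsDominantPair v r ∧ v r ∈ Dmin :=
    RootSystemData.isMinimalPair_iff
  refine ⟨fun v r => (hmin v r).trans <| and_congr_right fun hd =>
    (and_iff_left (RootSystemData.map_mem_corootLattice hd.1 hd.2.1)).symm, ?_⟩
  convert (Set.mapsTo_preimage (fun vr : (V ≃ₗ[ℝ] V) × V => vr.1 vr.2) Dmin).inter_bijOn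
    RS.bijOn_isDominantPair fun _ h => h.2 using 1
  ext ⟨v, r⟩
  exact (hmin v r).trans and_comm
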